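/- arXiv:1403.3946 — 5 statements merged into one kernel-verified Lean document; each statement's English description precedes it below -/
import Mathlib

section
/- The 'minus' continued fraction expansion of an irrational real number α, i.e. the expansion α = b₀ - 1/(b₁ - 1/(b₂ - ⋯)) with b₀ ∈ ℤ and bᵢ ∈ ℤ with bᵢ ≥ 2 for i ≥ 1, exists and is unique. -/
/-- The value of a finite 'minus' continued fraction `[[b₀; b₁, …, b_k]]
    = b₀ - 1/(b₁ - 1/(⋯ - 1/b_k))`.  (Division by zero in ℝ is 0, so the
    singleton case comes out right.) -/
noncomputable def mcfList : List ℤ → ℝ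
  | [] => 0
  | b :: l => (b : ℝ) - 1 / mcfList l

/-- The k-th convergent `[[b 0; b 1, …, b k]]` of the minus continued fraction
    with partial quotients `b`. -/
noncomputable def mcfConv (b : ℕ → ℤ) (k : ℕ) : ℝ :=
  mcfList ((List.range (k + 1)).map b)

/-!
Uniqueness: if `b` is an expansion of `α`, every convergent after the first is
`b₀ - 1/c` with `c > 1`, so `α ∈ [b₀ - 1, b₀]`, and irrationality forces `b₀ = ⌈α⌉`;
the shifted sequence is then an expansion of `1/(⌈α⌉ - α)`, and induction applies.

Existence: the quotients `⌈αₖ⌉` produced by the algorithm satisfy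
`α = [[b₀; …, bₙ, αₙ₊₁]]`. Writing this Möbius transformation of `αₙ₊₁ > 1` with the
continuants `pₙ, qₙ`, which satisfy `pₙqₙ₋₁ - pₙ₋₁qₙ = -1` and `qₙ ≥ n + 1`, gives
`|α - pₙ/qₙ| = 1/(qₙ(αₙ₊₁qₙ - qₙ₋₁)) ≤ 1/(n + 1)`.
-/

open Filter Set Topology

noncomputable def mcfMap : List ℤ → ℝ → ℝ
  | [], x => x
  | b :: l, x => (b : ℝ) - 1 / mcfMap l x

theorem mcfMap_append (l : List ℤ) (a : ℤ) (x : ℝ) :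
    mcfMap (l ++ [a]) x = mcfMap l ((a : ℝ) - 1 / x) := by
  induction l with
  | nil => rfl
  | cons b l ih => simp [mcfMap, ih]

theorem mcfList_append_singleton (l : List ℤ) (a : ℤ) :
    mcfList (l ++ [a]) = mcfMap l a := by
  induction l with
  | nil => simp [mcfMap, mcfList]
  | cons b l ih => simp [mcfMap, mcfList, ih]

theorem mcfConv_eq_mcfMap (b : ℕ → ℤ) (k : ℕ) :
    mcfConv b k = mcfMap ((List.range k).map b) (b k) := by
  rw [mcfConv, List.range_succ, List.map_append, List.map_singleton, mcfList_append_singleton]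

theorem mcfConv_succ (b : ℕ → ℤ) (k : ℕ) :
    mcfConv b (k + 1) = (b 0 : ℝ) - 1 / mcfConv (fun i => b (i + 1)) k := by
  rw [mcfConv, List.range_succ_eq_map]
  simp only [List.map_cons, List.map_map, mcfList]
  rfl

theorem sub_one_div_mem_Ioo {x : ℝ} (hx : 1 < x) (a : ℝ) : a - 1 / x ∈ Ioo (a - 1) a := by
  have hpos : 0 < 1 / x := by positivity
  have hlt : 1 / x < 1 := (div_lt_one (by linarith)).2 hx
  constructor <;> linarith

theorem one_lt_mcfConv {b : ℕ → ℤ} (hb : ∀ i, 2 ≤ b i) (k : ℕ) : 1 < mcfConv b k := by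
  induction k generalizing b with
  | zero =>
    have : (2 : ℝ) ≤ b 0 := by exact_mod_cast hb 0
    simp only [mcfConv, zero_add, List.range_one, List.map_cons, List.map_nil, mcfList,
      div_zero, sub_zero]
    linarith
  | succ k ih =>
    have hb0 : (2 : ℝ) ≤ b 0 := by exact_mod_cast hb 0
    have hmem := sub_one_div_mem_Ioo (ih fun i => hb (i + 1)) (b 0)
    rw [mcfConv_succ]
    linarith [hmem.1]

def IsMinusCFExpansion (b : ℕ → ℤ) (α : ℝ) : Prop :=
  (∀ i, 1 ≤ i → 2 ≤ b i) ∧ Tendsto (mcfConv b) atTop (𝓝 α)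

namespace IsMinusCFExpansion

variable {b : ℕ → ℤ} {α : ℝ}

theorem head_eq_ceil (h : IsMinusCFExpansion b α) (hα : Irrational α) : b 0 = ⌈α⌉ := by
  have hmem : ∀ k, mcfConv b (k + 1) ∈ Icc ((b 0 : ℝ) - 1) (b 0) := fun k => by
    rw [mcfConv_succ]
    exact Ioo_subset_Icc_self
      (sub_one_div_mem_Ioo (one_lt_mcfConv (fun i => h.1 (i + 1) (by omega)) k) _)
  have hα_mem : α ∈ Icc ((b 0 : ℝ) - 1) (b 0) :=
    isClosed_Icc.mem_of_tendsto (h.2.comp (tendsto_add_atTop_nat 1)) (.of_forall hmem)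
  have hne : ((b 0 : ℝ) - 1) ≠ α := by
    simpa using (hα.ne_int (b 0 - 1)).symm
  rw [eq_comm, Int.ceil_eq_iff]
  exact ⟨hα_mem.1.lt_of_ne hne, hα_mem.2⟩

theorem tail (h : IsMinusCFExpansion b α) (h0 : (b 0 : ℝ) ≠ α) :
    IsMinusCFExpansion (fun i => b (i + 1)) ((b 0 : ℝ) - α)⁻¹ := by
  refine ⟨fun i _ => h.1 (i + 1) (by omega), ?_⟩
  have hconv : mcfConv (fun i => b (i + 1)) = fun k => ((b 0 : ℝ) - mcfConv b (k + 1))⁻¹ :=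
    funext fun k => by rw [mcfConv_succ, sub_sub_cancel, one_div, inv_inv]
  rw [hconv]
  exact (tendsto_const_nhds.sub (h.2.comp (tendsto_add_atTop_nat 1))).inv₀ (sub_ne_zero.2 h0)

end IsMinusCFExpansion

noncomputable def mcfStep (x : ℝ) : ℝ := ((⌈x⌉ : ℝ) - x)⁻¹

noncomputable def mcfQuotients (α : ℝ) (k : ℕ) : ℤ := ⌈mcfStep^[k] α⌉

theorem mcfQuotients_succ (α : ℝ) (k : ℕ) :
    mcfQuotients α (k + 1) = mcfQuotients (mcfStep α) k := rfl

theorem ceil_sub_one_div_mcfStep (x : ℝ) : (⌈x⌉ : ℝ) - 1 / mcfStep x = x := by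
  rw [mcfStep, one_div, inv_inv, sub_sub_cancel]

theorem irrational_mcfStep {x : ℝ} (hx : Irrational x) : Irrational (mcfStep x) :=
  (hx.intCast_sub _).inv

theorem irrational_mcfStep_iterate {x : ℝ} (hx : Irrational x) (k : ℕ) :
    Irrational (mcfStep^[k] x) := by
  induction k with
  | zero => exact hx
  | succ k ih => rw [Function.iterate_succ_apply']; exact irrational_mcfStep ih

theorem one_lt_mcfStep {x : ℝ} (hx : Irrational x) : 1 < mcfStep x := by
  have hlt : x < ⌈x⌉ := (Int.le_ceil x).lt_of_ne (hx.ne_int _)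
  have hle : (⌈x⌉ : ℝ) < x + 1 := Int.ceil_lt_add_one x
  rw [mcfStep, one_lt_inv_iff₀]
  constructor <;> linarith

theorem one_lt_mcfStep_iterate_succ {x : ℝ} (hx : Irrational x) (k : ℕ) :
    1 < mcfStep^[k + 1] x := by
  rw [Function.iterate_succ_apply']
  exact one_lt_mcfStep (irrational_mcfStep_iterate hx k)

theorem two_le_mcfQuotients {α : ℝ} (hα : Irrational α) (i : ℕ) (hi : 1 ≤ i) :
    2 ≤ mcfQuotients α i := by
  obtain ⟨k, rfl⟩ : ∃ k, i = k + 1 := ⟨i - 1, by omega⟩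
  have h1 : (1 : ℤ) < mcfQuotients α (k + 1) := by
    rw [mcfQuotients, Int.lt_ceil]
    exact_mod_cast one_lt_mcfStep_iterate_succ hα k
  omega

theorem mcfMap_mcfQuotients (α : ℝ) (n : ℕ) :
    mcfMap ((List.range n).map (mcfQuotients α)) (mcfStep^[n] α) = α := by
  induction n with
  | zero => rfl
  | succ n ih =>
    rw [List.range_succ, List.map_append, List.map_singleton, mcfMap_append,
      Function.iterate_succ_apply', mcfQuotients, ceil_sub_one_div_mcfStep, ih]

/-- With `(u₀, u₁) = (0, 1)` and `(-1, 0)` these are the numerators and denominators of the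
convergents, shifted by two in the index. -/
noncomputable def mcfContinuant (b : ℕ → ℤ) (u₀ u₁ : ℝ) : ℕ → ℝ
  | 0 => u₀
  | 1 => u₁
  | n + 2 => b n * mcfContinuant b u₀ u₁ (n + 1) - mcfContinuant b u₀ u₁ n

section Continuants

variable (b : ℕ → ℤ)

theorem mcfContinuant_wronskian (u₀ u₁ v₀ v₁ : ℝ) (n : ℕ) :
    mcfContinuant b u₀ u₁ (n + 1) * mcfContinuant b v₀ v₁ n
      - mcfContinuant b u₀ u₁ n * mcfContinuant b v₀ v₁ (n + 1) = u₁ * v₀ - u₀ * v₁ := by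
  induction n with
  | zero => rfl
  | succ n ih =>
    simp only [mcfContinuant]
    linear_combination ih

theorem mcfContinuant_ratio_succ (u₀ u₁ v₀ v₁ : ℝ) (n : ℕ) {x : ℝ} (hx : x ≠ 0) :
    (x * mcfContinuant b u₀ u₁ (n + 2) - mcfContinuant b u₀ u₁ (n + 1))
        / (x * mcfContinuant b v₀ v₁ (n + 2) - mcfContinuant b v₀ v₁ (n + 1))
      = ((b n - 1 / x) * mcfContinuant b u₀ u₁ (n + 1) - mcfContinuant b u₀ u₁ n)
        / ((b n - 1 / x) * mcfContinuant b v₀ v₁ (n + 1) - mcfContinuant b v₀ v₁ n) := by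
  have key : ∀ w₀ w₁ : ℝ, x * mcfContinuant b w₀ w₁ (n + 2) - mcfContinuant b w₀ w₁ (n + 1)
      = x * ((b n - 1 / x) * mcfContinuant b w₀ w₁ (n + 1) - mcfContinuant b w₀ w₁ n) := by
    intro w₀ w₁
    simp only [mcfContinuant]
    field_simp
    ring
  rw [key, key, mul_div_mul_left _ _ hx]

variable {b}

theorem mcfContinuant_den_bounds (hb : ∀ i, 1 ≤ i → 2 ≤ b i) :
    ∀ n : ℕ, 1 ≤ mcfContinuant b (-1) 0 (n + 1) - mcfContinuant b (-1) 0 n ∧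
      (n : ℝ) ≤ mcfContinuant b (-1) 0 (n + 1)
  | 0 => by norm_num [mcfContinuant]
  | 1 => by norm_num [mcfContinuant]
  | n + 2 => by
    obtain ⟨hstep, hlow⟩ := mcfContinuant_den_bounds hb (n + 1)
    have hbn : (2 : ℝ) ≤ b (n + 1) := by exact_mod_cast hb (n + 1) (by omega)
    have hn : (0 : ℝ) ≤ n := n.cast_nonneg
    simp only [mcfContinuant] at hstep hlow ⊢
    push_cast at hlow ⊢
    constructor <;> nlinarith

theorem one_le_mcfContinuant_den_mul_sub (hb : ∀ i, 1 ≤ i → 2 ≤ b i) (n : ℕ) {x : ℝ}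
    (hx : 1 ≤ x) : 1 ≤ x * mcfContinuant b (-1) 0 (n + 1) - mcfContinuant b (-1) 0 n := by
  obtain ⟨hstep, hlow⟩ := mcfContinuant_den_bounds hb n
  have hn : (0 : ℝ) ≤ n := n.cast_nonneg
  nlinarith

theorem mcfMap_eq_div (hb : ∀ i, 1 ≤ i → 2 ≤ b i) :
    ∀ (n : ℕ) {x : ℝ}, 1 < x → mcfMap ((List.range n).map b) x =
      (x * mcfContinuant b 0 1 (n + 1) - mcfContinuant b 0 1 n)
        / (x * mcfContinuant b (-1) 0 (n + 1) - mcfContinuant b (-1) 0 n)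
  | 0, x, _ => by simp [mcfMap, mcfContinuant]
  | 1, x, hx => by
    have hx0 : x ≠ 0 := by positivity
    simp [mcfMap, mcfContinuant]
    field_simp
  | n + 2, x, hx => by
    have hy : 1 < (b (n + 1) : ℝ) - 1 / x := by
      have hbn : (2 : ℝ) ≤ b (n + 1) := by exact_mod_cast hb (n + 1) (by omega)
      linarith [(sub_one_div_mem_Ioo hx (b (n + 1))).1]
    rw [List.range_succ, List.map_append, List.map_singleton, mcfMap_append,
      mcfMap_eq_div hb (n + 1) hy]
    exact (mcfContinuant_ratio_succ b 0 1 (-1) 0 (n + 1) (by positivity)).symm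

theorem mcfConv_eq_div (hb : ∀ i, 1 ≤ i → 2 ≤ b i) :
    ∀ n : ℕ, mcfConv b n = mcfContinuant b 0 1 (n + 2) / mcfContinuant b (-1) 0 (n + 2)
  | 0 => by simp [mcfConv, mcfList, mcfContinuant]
  | n + 1 => by
    have hbn : (1 : ℝ) < b (n + 1) := by exact_mod_cast (hb (n + 1) (by omega))
    rw [mcfConv_eq_mcfMap, mcfMap_eq_div hb (n + 1) hbn]
    rfl

theorem abs_mcfMap_sub_mcfConv_le (hb : ∀ i, 1 ≤ i → 2 ≤ b i) (n : ℕ) {x : ℝ} (hx : 1 < x) :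
    |mcfMap ((List.range (n + 1)).map b) x - mcfConv b n| ≤ 1 / (n + 1) := by
  rw [mcfMap_eq_div hb (n + 1) hx, mcfConv_eq_div hb n]
  have hdet := mcfContinuant_wronskian b 0 1 (-1) 0 (n + 1)
  have hq : (n : ℝ) + 1 ≤ mcfContinuant b (-1) 0 (n + 2) := by
    exact_mod_cast (mcfContinuant_den_bounds hb (n + 1)).2
  have hD := one_le_mcfContinuant_den_mul_sub hb (n + 1) hx.le
  set p := mcfContinuant b 0 1 (n + 2)
  set p' := mcfContinuant b 0 1 (n + 1)
  set q := mcfContinuant b (-1) 0 (n + 2)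
  set q' := mcfContinuant b (-1) 0 (n + 1)
  have hq0 : 0 < q := lt_of_lt_of_le (by positivity) hq
  have hnum : (x * p - p') * q - (x * q - q') * p = -1 := by linear_combination hdet
  calc |(x * p - p') / (x * q - q') - p / q| = |-1 / ((x * q - q') * q)| := by
        rw [div_sub_div _ _ (by linarith) hq0.ne', hnum]
    _ = 1 / ((x * q - q') * q) := by
        rw [abs_div, abs_neg, abs_one, abs_of_pos (mul_pos (by linarith) hq0)]
    _ ≤ 1 / (n + 1) := one_div_le_one_div_of_le (by positivity) (by nlinarith)

end Continuants

theorem isMinusCFExpansion_mcfQuotients {α : ℝ} (hα : Irrational α) :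
    IsMinusCFExpansion (mcfQuotients α) α := by
  refine ⟨two_le_mcfQuotients hα, tendsto_iff_dist_tendsto_zero.2 ?_⟩
  refine squeeze_zero (fun _ => dist_nonneg) (fun n => ?_) tendsto_one_div_add_atTop_nhds_zero_nat
  rw [Real.dist_eq, abs_sub_comm]
  nth_rewrite 1 [← mcfMap_mcfQuotients α (n + 1)]
  exact abs_mcfMap_sub_mcfConv_le (two_le_mcfQuotients hα) n (one_lt_mcfStep_iterate_succ hα n)

theorem IsMinusCFExpansion.eq_mcfQuotients {b : ℕ → ℤ} {α : ℝ} (h : IsMinusCFExpansion b α)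
    (hα : Irrational α) : b = mcfQuotients α := by
  funext i
  induction i generalizing b α with
  | zero => exact h.head_eq_ceil hα
  | succ i ih =>
    have h0 := h.head_eq_ceil hα
    have htail := h.tail (by rw [h0]; exact (hα.ne_int _).symm)
    rw [h0] at htail
    exact (ih htail (irrational_mcfStep hα)).trans (mcfQuotients_succ α i).symm

/-- For every irrational real number α there is a unique sequence of integers
    `b₀, b₁, b₂, …` with `bᵢ ≥ 2` for `i ≥ 1` such that
    `α = lim_k [[b₀; b₁, …, b_k]]` (the 'minus' continued fraction expansion). -/
theorem minus_cf_exists_unique (α : ℝ) (hα : Irrational α) :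
    ∃! b : ℕ → ℤ, (∀ i, 1 ≤ i → 2 ≤ b i) ∧
      Filter.Tendsto (mcfConv b) Filter.atTop (nhds α) :=
  ⟨mcfQuotients α, isMinusCFExpansion_mcfQuotients hα, fun _ hb => IsMinusCFExpansion.eq_mcfQuotients hb hα⟩
end

section
/- Let p be an odd prime, n ≥ 1, ψ a Dirichlet character mod p^{n+1} of order p^n, and a an integer with p ∣ a but p^{n+1} ∤ a. Then the twisted Dedekind sum D_ψ(a,a) = ∑_{t=1}^{p^{n+1}} ψ(t)({at/p^{n+1}} − 1/2)² equals 0. -/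
/-!
Write `N = p ^ (n + 1)` and `a = p * b`. Then `{a t / N} = {b t / p ^ n}` depends only on
`t mod p ^ n`, so the summand is `ψ t * g (a t)` for a function `g` on `ZMod N`, and
`g (a u t) = g (a t)` for every unit `u ≡ 1 mod p ^ n`. Since the order `p ^ n` of `ψ` does not
divide `φ (p ^ n)`, `ψ` does not factor through `(ZMod (p ^ n))ˣ`, so some such `u` has
`ψ u ≠ 1`. Substituting `t ↦ u t` multiplies the sum by `ψ u`, hence the sum is `0`.
-/

open Finset

theorem Nat.not_dvd_totient_self {n : ℕ} (hn : 1 < n) : ¬ n ∣ n.totient := fun h =>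
  (Nat.totient_lt n hn).not_ge (Nat.le_of_dvd (Nat.totient_pos.2 (by omega)) h)

theorem MulChar.sum_mul_eq_zero_of_forall_mul_left_eq {M R : Type*} [CommMonoid M] [Fintype M]
    [CommRing R] [NoZeroDivisors R] (χ : MulChar M R) {u : Mˣ} (hχu : χ u ≠ 1) {f : M → R}
    (hf : ∀ x, f (u * x) = f x) : ∑ x, χ x * f x = 0 := by
  refine eq_zero_of_mul_eq_self_left hχu ?_
  calc χ u * ∑ x, χ x * f x = ∑ x, χ (u * x) * f (u * x) := by
        simp only [mul_sum, map_mul, hf, mul_assoc]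
    _ = ∑ x, χ x * f x := u.mulLeft_bijective.sum_comp fun x => χ x * f x

theorem DirichletCharacter.exists_unitsMap_eq_one_and_ne_one {R : Type*} [CommMonoidWithZero R]
    {M N : ℕ} (hMN : M ∣ N) (χ : DirichletCharacter R N) (h : ¬ orderOf χ ∣ M.totient) :
    ∃ u : (ZMod N)ˣ, ZMod.unitsMap hMN u = 1 ∧ χ u ≠ 1 := by
  have : NeZero M := ⟨by rintro rfl; simp at h⟩
  by_contra! hker
  refine h (orderOf_dvd_of_pow_eq_one (MulChar.ext fun u => ?_))
  rw [MulChar.pow_apply_coe, MulChar.one_apply_coe, ← map_pow, ← Units.val_pow_eq_pow_val]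
  exact hker _ (by rw [map_pow, ZMod.pow_totient])

theorem ZMod.intCast_mul_eq_of_unitsMap_eq_one {M k N : ℕ} [NeZero N] (hN : N = M * k) {a : ℤ}
    (ha : (k : ℤ) ∣ a) {u : (ZMod N)ˣ} (hu : ZMod.unitsMap (Dvd.intro k hN.symm) u = 1) :
    (a : ZMod N) * u = a := by
  obtain ⟨b, rfl⟩ := ha
  have hMN : M ∣ N := Dvd.intro k hN.symm
  obtain ⟨c, hc⟩ : M ∣ ((u : ZMod N) - 1).val := by
    rw [← ZMod.natCast_eq_zero_iff, ZMod.natCast_val, ← ZMod.castHom_apply (h := hMN), map_sub,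
      map_one, ZMod.castHom_apply, ← ZMod.unitsMap_val hMN, hu, Units.val_one, sub_self]
  have hk : (k : ZMod N) * ((u : ZMod N) - 1) = 0 := by
    rw [← ZMod.natCast_zmod_val ((u : ZMod N) - 1), hc, ← Nat.cast_mul, ZMod.natCast_eq_zero_iff,
      hN]
    exact ⟨c, by ring⟩
  push_cast
  linear_combination (b : ZMod N) * hk

theorem DirichletCharacter.sum_mul_comp_intCast_mul_eq_zero {R : Type*} [CommRing R]
    [NoZeroDivisors R] {M k N : ℕ} [NeZero N] (hN : N = M * k) (hM : 1 < M)
    (χ : DirichletCharacter R N) (hχ : orderOf χ = M) {a : ℤ} (ha : (k : ℤ) ∣ a)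
    (g : ZMod N → R) : ∑ x, χ x * g (a * x) = 0 := by
  obtain ⟨u, hu, hχu⟩ := χ.exists_unitsMap_eq_one_and_ne_one (Dvd.intro k hN.symm)
    (by rw [hχ]; exact Nat.not_dvd_totient_self hM)
  refine χ.sum_mul_eq_zero_of_forall_mul_left_eq hχu fun x => ?_
  rw [← mul_assoc, ZMod.intCast_mul_eq_of_unitsMap_eq_one hN ha hu]

theorem ZMod.sum_range_natCast {M : Type*} [AddCommMonoid M] {N : ℕ} [NeZero N]
    (f : ZMod N → M) : ∑ t ∈ range N, f t = ∑ x, f x :=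
  sum_nbij' (↑) ZMod.val (by simp) (fun x _ => by simpa using ZMod.val_lt x)
    (fun t ht => ZMod.val_cast_of_lt (mem_range.1 ht)) (fun x _ => ZMod.natCast_zmod_val x)
    fun _ _ => rfl

theorem ZMod.sum_Icc_one_natCast {M : Type*} [AddCommMonoid M] {N : ℕ} [NeZero N]
    (f : ZMod N → M) : ∑ t ∈ Icc 1 N, f t = ∑ x, f x := by
  calc ∑ t ∈ Icc 1 N, f t = ∑ t ∈ range N, f ((t + 1 : ℕ) : ZMod N) := by
        rw [range_eq_Ico, sum_Ico_add' (fun t : ℕ => f t), ← Ico_add_one_right_eq_Icc, zero_add]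
    _ = ∑ x, f (x + 1) := by simpa using ZMod.sum_range_natCast fun x => f (x + 1)
    _ = ∑ x, f x := Equiv.sum_comp (Equiv.addRight 1) f

theorem Int.fract_intCast_mul_natCast_div {K : Type*} [Field K] [LinearOrder K]
    [IsStrictOrderedRing K] [FloorRing K] (a : ℤ) (t N : ℕ) [NeZero N] :
    Int.fract ((a : K) * t / N) = (((a : ZMod N) * t).val : K) / N := by
  rw [← Int.cast_natCast t, ← Int.cast_mul, Int.fract_div_intCast_eq_div_intCast_mod,
    ← Int.cast_natCast (R := K) (ZMod.val _), ← Int.cast_natCast (R := ZMod N) t, ← Int.cast_mul,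
    ZMod.val_intCast]

theorem twisted_dedekind_sum_vanishes_general (p n : ℕ) (hp : p.Prime)
    (hn : 1 ≤ n) (ψ : DirichletCharacter ℂ (p ^ (n + 1)))
    (hord : orderOf ψ = p ^ n) (a : ℤ)
    (hpa : (p : ℤ) ∣ a) :
    ∑ t ∈ Finset.Icc 1 (p ^ (n + 1)),
      ψ (t : ZMod (p ^ (n + 1))) *
        Complex.ofReal (Int.fract ((a : ℝ) * t / (p ^ (n + 1))) - 1 / 2) ^ 2 = 0 := by
  have : NeZero (p ^ (n + 1)) := ⟨pow_ne_zero _ hp.ne_zero⟩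
  set g : ZMod (p ^ (n + 1)) → ℂ :=
    fun y => Complex.ofReal ((y.val : ℝ) / (p ^ (n + 1) : ℕ) - 1 / 2) ^ 2
  calc _ = ∑ t ∈ Icc 1 (p ^ (n + 1)), ψ (t : ZMod (p ^ (n + 1))) * g (a * t) := by
        refine sum_congr rfl fun t _ => ?_
        rw [← Nat.cast_pow, Int.fract_intCast_mul_natCast_div]
    _ = ∑ x, ψ x * g (a * x) := ZMod.sum_Icc_one_natCast fun x => ψ x * g (a * x)
    _ = 0 := ψ.sum_mul_comp_intCast_mul_eq_zero (pow_succ p n)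
          (Nat.one_lt_pow (by omega) hp.one_lt) hord hpa g

/-- Let `p` be an odd prime, `n ≥ 1`, `ψ` a Dirichlet character mod `p^(n+1)`
    of order `p^n`, and `a` an integer with `p ∣ a` but `p^(n+1) ∤ a`.  Then
    the twisted Dedekind sum `∑_{t=1}^{p^{n+1}} ψ(t)({at/p^{n+1}} − 1/2)²`
    vanishes. -/
theorem twisted_dedekind_sum_vanishes (p n : ℕ) (hp : p.Prime) (hodd : Odd p)
    (hn : 1 ≤ n) (ψ : DirichletCharacter ℂ (p ^ (n + 1)))
    (hord : orderOf ψ = p ^ n) (a : ℤ)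
    (hpa : (p : ℤ) ∣ a) (hpna : ¬ ((p : ℤ) ^ (n + 1) ∣ a)) :
    ∑ t ∈ Finset.Icc 1 (p ^ (n + 1)),
      ψ (t : ZMod (p ^ (n + 1))) *
        Complex.ofReal (Int.fract ((a : ℝ) * t / (p ^ (n + 1))) - 1 / 2) ^ 2 = 0 :=
  twisted_dedekind_sum_vanishes_general p n hp hn ψ hord a hpa
end

section
/- Let p be an odd prime, ζ a primitive p^n-th root of unity (n ≥ 1), g a primitive root mod p^{n+1}, and m ≥ 1 with m ≤ n. For any r coprime to p, ∑_{q=0}^{p^m−1} ζ^{ind_g(qp^{n+1−m}+r)} = 0, where ind_g(x) is the discrete logarithm of x base g mod p^{n+1} (i.e., g^{ind_g(x)} ≡ x mod p^{n+1}). -/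
/-!
Let `P = p ^ (n + 1 - m)` and `c = g ^ φ(P)`. Since `c ≡ 1 [MOD P]`, multiplication by `c` permutes
the progression `r + Pℤ` modulo `p ^ (n + 1)`, while it multiplies every term `ζ ^ ind x` by
`ζ ^ φ(P)`. This factor is not `1`, because `P ∣ p ^ n` but `P ∤ φ(P)`; hence the sum vanishes.
-/

open Finset Nat

theorem IsUnit.of_forall_isUnit_exists_pow {M : Type*} [Monoid M] {x u : M} (hu : IsUnit u)
    (hu1 : u ≠ 1) (h : ∀ y : M, IsUnit y → ∃ k : ℕ, x ^ k = y) : IsUnit x := by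
  obtain ⟨k, hk⟩ := h u hu
  have hk0 : k ≠ 0 := by
    rintro rfl
    exact hu1 (hk ▸ pow_zero x)
  exact (isUnit_pow_iff hk0).1 (hk ▸ hu)

theorem orderOf_eq_card_units_of_forall_isUnit_exists_pow {M : Type*} [Monoid M] {x : M}
    (hx : IsUnit x) (h : ∀ y : M, IsUnit y → ∃ k : ℕ, x ^ k = y) :
    orderOf x = Nat.card Mˣ := by
  rw [← hx.unit_spec, orderOf_units]
  refine orderOf_eq_card_of_forall_mem_zpowers fun u => ?_
  obtain ⟨k, hk⟩ := h u u.isUnit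
  exact ⟨k, Units.ext (by simpa using hk)⟩

theorem ZMod.orderOf_eq_of_forall_isUnit_exists_pow {p n : ℕ} (hp : p.Prime) (hn : n ≠ 0)
    {g : ZMod (p ^ (n + 1))} (hg : ∀ x : ZMod (p ^ (n + 1)), IsUnit x → ∃ k : ℕ, g ^ k = x) :
    orderOf g = p ^ n * (p - 1) := by
  have : NeZero (p ^ (n + 1)) := ⟨pow_ne_zero _ hp.ne_zero⟩
  have : Fact (2 < p ^ (n + 1)) :=
    ⟨hp.two_le.trans_lt (by simpa using Nat.pow_lt_pow_right hp.one_lt (by omega : 1 < n + 1))⟩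
  rw [orderOf_eq_card_units_of_forall_isUnit_exists_pow
      (IsUnit.of_forall_isUnit_exists_pow isUnit_one.neg ZMod.neg_one_ne_one hg) hg,
    Nat.card_eq_fintype_card, ZMod.card_units_eq_totient, totient_prime_pow_succ hp]

theorem pow_eq_pow_of_pow_eq_pow_of_dvd_orderOf {G M : Type*} [Monoid G] [Monoid M] {x : G}
    (hx : IsOfFinOrder x) {ζ : M} {k : ℕ} (hζ : ζ ^ k = 1) (hk : k ∣ orderOf x) {a b : ℕ}
    (h : x ^ a = x ^ b) : ζ ^ a = ζ ^ b := by
  rw [pow_eq_pow_mod a hζ, pow_eq_pow_mod b hζ, (hx.pow_eq_pow_iff_modEq.1 h).of_dvd hk]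

theorem Finset.sum_range_affine_mod {M : Type*} [AddCommMonoid M] (f : ℕ → M) {k a b : ℕ}
    (ha : a.Coprime k) : ∑ q ∈ range k, f ((a * q + b) % k) = ∑ q ∈ range k, f q := by
  have hmaps : Set.MapsTo (fun q => (a * q + b) % k) (range k : Set ℕ) (range k) :=
    fun q hq => mem_range.2 (Nat.mod_lt _ (Nat.zero_lt_of_lt (mem_range.1 hq)))
  have hinj : Set.InjOn (fun q => (a * q + b) % k) (range k : Set ℕ) := fun q hq q' hq' h =>
    ((Nat.ModEq.add_right_cancel' b h).cancel_left_of_coprime (Nat.coprime_comm.1 ha)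
      ).eq_of_lt_of_lt (mem_range.1 hq) (mem_range.1 hq')
  exact sum_nbij _ hmaps hinj ((finite_toSet _).injOn_iff_bijOn_of_mapsTo hmaps |>.1 hinj).surjOn
    fun _ _ => rfl

theorem Finset.sum_range_comp_mul_of_mod_eq_one {M : Type*} [AddCommMonoid M] (F : ℕ → M)
    {k P c r : ℕ} (hc : c % P = 1) (hck : c.Coprime k)
    (hF : ∀ q q', q ≡ q' [MOD k] → F (q * P + r) = F (q' * P + r)) :
    ∑ q ∈ range k, F (c * (q * P + r)) = ∑ q ∈ range k, F (q * P + r) := by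
  obtain ⟨t, rfl⟩ : ∃ t, c = t * P + 1 := ⟨c / P, by rw [← hc, mul_comm, Nat.div_add_mod]⟩
  calc ∑ q ∈ range k, F ((t * P + 1) * (q * P + r))
      = ∑ q ∈ range k, F (((t * P + 1) * q + t * r) % k * P + r) :=
        sum_congr rfl fun q _ => by
          rw [hF _ _ (Nat.mod_modEq _ k)]
          ring_nf
    _ = ∑ q ∈ range k, F (q * P + r) := sum_range_affine_mod (fun q => F (q * P + r)) hck

theorem sum_zeta_ind_eq_zero_general (p n m : ℕ) (hp : p.Prime)
    (hm : 1 ≤ m) (hmn : m ≤ n)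
    (ζ : ℂ) (hζ : IsPrimitiveRoot ζ (p ^ n))
    (g : ℕ)
    (hg : ∀ x : ZMod (p ^ (n + 1)), IsUnit x →
      ∃ k : ℕ, (g : ZMod (p ^ (n + 1))) ^ k = x)
    (ind : ℕ → ℕ)
    (hind : ∀ x : ℕ, ¬ p ∣ x →
      (g : ZMod (p ^ (n + 1))) ^ (ind x) = (x : ZMod (p ^ (n + 1))))
    (r : ℕ) (hr : Nat.Coprime r p) :
    ∑ q ∈ Finset.range (p ^ m), ζ ^ (ind (q * p ^ (n + 1 - m) + r)) = 0 := by
  set P := p ^ (n + 1 - m)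
  have hNP : p ^ m * P = p ^ (n + 1) := by rw [← pow_add]; congr 1; omega
  have hP : 1 < P := Nat.one_lt_pow (by omega) hp.one_lt
  have hord := ZMod.orderOf_eq_of_forall_isUnit_exists_pow hp (by omega) hg
  have hfin : IsOfFinOrder (g : ZMod (p ^ (n + 1))) :=
    orderOf_pos_iff.1 (hord ▸ Nat.mul_pos (pow_pos hp.pos n) (Nat.sub_pos_of_lt hp.one_lt))
  have hlog {a b : ℕ} : (g : ZMod (p ^ (n + 1))) ^ a = g ^ b → ζ ^ a = ζ ^ b :=
    pow_eq_pow_of_pow_eq_pow_of_dvd_orderOf hfin hζ.pow_eq_one (hord ▸ dvd_mul_right _ _)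
  have hgp : g.Coprime p :=
    ((ZMod.isUnit_iff_coprime g _).1 hfin.isUnit).coprime_dvd_right (dvd_pow_self p (by omega))
  have hc : g ^ φ P % P = 1 := by
    rw [Nat.ModEq.pow_totient (hgp.pow_right _), Nat.mod_eq_of_lt hP]
  have hprog (q : ℕ) : ¬ p ∣ q * P + r := fun h => hp.coprime_iff_not_dvd.1 hr.symm
    ((Nat.dvd_add_right (dvd_mul_of_dvd_right (dvd_pow_self p (by omega : n + 1 - m ≠ 0)) q)).1 h)
  have hmul (q : ℕ) : ζ ^ ind (g ^ φ P * (q * P + r)) = ζ ^ φ P * ζ ^ ind (q * P + r) := by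
    have hpg : ¬ p ∣ g ^ φ P := fun h => hp.coprime_iff_not_dvd.1 hgp.symm (hp.dvd_of_dvd_pow h)
    rw [← pow_add]
    apply hlog
    rw [hind _ (hp.not_dvd_mul hpg (hprog q)), pow_add (g : ZMod (p ^ (n + 1))), hind _ (hprog q)]
    push_cast
    ring
  have hper (q q' : ℕ) (h : q ≡ q' [MOD p ^ m]) : ζ ^ ind (q * P + r) = ζ ^ ind (q' * P + r) := by
    apply hlog
    rw [hind _ (hprog q), hind _ (hprog q'), ZMod.natCast_eq_natCast_iff, ← hNP]
    exact (h.mul_right' P).add_right r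
  have hS := sum_range_comp_mul_of_mod_eq_one (fun x => ζ ^ ind x) hc (hgp.pow _ _) hper
  simp only [hmul, ← mul_sum] at hS
  have hne : ζ ^ φ P ≠ 1 := fun h => Nat.not_dvd_of_pos_of_lt (totient_pos.2 (by omega))
    (totient_lt P hP) ((Nat.pow_dvd_pow p (by omega)).trans ((hζ.pow_eq_one_iff_dvd _).1 h))
  by_contra h0
  exact hne ((mul_eq_right₀ h0).1 hS)

/-- Let `p` be an odd prime, `ζ` a primitive `p^n`-th root of unity (`n ≥ 1`),
    `g` a primitive root mod `p^(n+1)`, and `1 ≤ m ≤ n`.  If `ind` is a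
    discrete logarithm base `g` mod `p^(n+1)`, then for every `r` coprime to
    `p` we have `∑_{q=0}^{p^m−1} ζ^{ind(q·p^{n+1−m}+r)} = 0`. -/
theorem sum_zeta_ind_eq_zero (p n m : ℕ) (hp : p.Prime) (hodd : Odd p)
    (hn : 1 ≤ n) (hm : 1 ≤ m) (hmn : m ≤ n)
    (ζ : ℂ) (hζ : IsPrimitiveRoot ζ (p ^ n))
    (g : ℕ)
    (hg : ∀ x : ZMod (p ^ (n + 1)), IsUnit x →
      ∃ k : ℕ, (g : ZMod (p ^ (n + 1))) ^ k = x)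
    (ind : ℕ → ℕ)
    (hind : ∀ x : ℕ, ¬ p ∣ x →
      (g : ZMod (p ^ (n + 1))) ^ (ind x) = (x : ZMod (p ^ (n + 1))))
    (r : ℕ) (hr : Nat.Coprime r p) :
    ∑ q ∈ Finset.range (p ^ m), ζ ^ (ind (q * p ^ (n + 1 - m) + r)) = 0 :=
  sum_zeta_ind_eq_zero_general p n m hp hm hmn ζ hζ g hg ind hind r hr
end

section
/- Let K be a real quadratic field with no units of negative norm, ε > 1 the generator of the group of totally positive units, and suppose ε^a ≡ b (mod p^{n+1}) for integers a, b with p an odd prime unramified in K. Then b ≡ 1 or b ≡ −1 (mod p^{n+1}). -/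
/-!
Taking norms down to `ℤ` turns the congruence `ε ^ a ≡ b (mod p ^ (n + 1))` into
`1 = N(ε) ^ a ≡ N(b) = b ^ 2 (mod p ^ (n + 1))`, because the norm is the determinant of the
multiplication matrix and congruent matrices have congruent determinants. Since `p` is odd it
cannot divide both `b - 1` and `b + 1`, so `p ^ (n + 1)` divides one of them.
-/

open NumberField

theorem Matrix.det_sub_det_mem {R n : Type*} [CommRing R] [Fintype n] [DecidableEq n]
    {I : Ideal R} {A B : Matrix n n R} (h : ∀ i j, A i j - B i j ∈ I) :
    A.det - B.det ∈ I := by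
  rw [← Ideal.Quotient.eq, RingHom.map_det, RingHom.map_det]
  congr 1
  ext i j
  exact Ideal.Quotient.eq.mpr (h i j)

theorem Algebra.dvd_norm_sub_norm {R S : Type*} [CommRing R] [CommRing S] [Algebra R S]
    [Module.Free R S] [Module.Finite R S] {r : R} {x y : S} (h : algebraMap R S r ∣ x - y) :
    r ∣ Algebra.norm R x - Algebra.norm R y := by
  classical
  obtain ⟨t, ht⟩ := h
  let b := Module.Free.chooseBasis R S
  rw [Algebra.norm_eq_matrix_det b, Algebra.norm_eq_matrix_det b, ← Ideal.mem_span_singleton]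
  refine Matrix.det_sub_det_mem fun i j => Ideal.mem_span_singleton.mpr ?_
  rw [← Matrix.sub_apply, ← map_sub, ht, ← Algebra.smul_def, map_smul]
  exact dvd_mul_right r _

theorem Prime.pow_dvd_sub_one_or_add_one_of_dvd_sq_sub_one {R : Type*} [CommRing R] [IsDomain R]
    {p : R} (hp : Prime p) (hp2 : ¬p ∣ 2) {k : ℕ} {b : R} (h : p ^ k ∣ b ^ 2 - 1) :
    p ^ k ∣ b - 1 ∨ p ^ k ∣ b + 1 := by
  rw [sq, mul_self_sub_one] at h
  by_cases hminus : p ∣ b - 1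
  · have hplus : ¬p ∣ b + 1 := fun hplus => hp2 <| by
      simpa [add_sub_sub_cancel, one_add_one_eq_two] using dvd_sub hplus hminus
    exact Or.inl (hp.pow_dvd_of_dvd_mul_left k hplus h)
  · exact Or.inr (hp.pow_dvd_of_dvd_mul_right k hminus h)

theorem unit_power_congruent_int_general (K : Type*) [Field K] [NumberField K]
    (hdeg : Module.finrank ℚ K = 2)
    (p : ℕ) (hp : p.Prime) (hodd : Odd p)
    (hnoneg : ∀ u : (𝓞 K)ˣ, Algebra.norm ℤ ((u : 𝓞 K)) = 1)
    (ε : (𝓞 K)ˣ)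
    (a n : ℕ) (b : ℤ)
    (hcong : ((ε : 𝓞 K)) ^ a - (b : 𝓞 K) ∈
      Ideal.span {((p : 𝓞 K)) ^ (n + 1)}) :
    (p : ℤ) ^ (n + 1) ∣ (b - 1) ∨ (p : ℤ) ^ (n + 1) ∣ (b + 1) := by
  have hp2 : ¬(p : ℤ) ∣ 2 := by
    rw [Int.natCast_dvd_ofNat, Nat.prime_dvd_prime_iff_eq hp Nat.prime_two]
    rintro rfl
    exact Nat.not_odd_iff_even.mpr even_two hodd
  refine (Nat.prime_iff_prime_int.mp hp).pow_dvd_sub_one_or_add_one_of_dvd_sq_sub_one hp2 ?_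
  have hdvd : algebraMap ℤ (𝓞 K) ((p : ℤ) ^ (n + 1)) ∣
      (ε : 𝓞 K) ^ a - algebraMap ℤ (𝓞 K) b := by
    simpa using Ideal.mem_span_singleton.mp hcong
  have hnorm := Algebra.dvd_norm_sub_norm hdvd
  rw [map_pow, hnoneg, one_pow, Algebra.norm_algebraMap, RingOfIntegers.rank, hdeg] at hnorm
  simpa using hnorm.neg_right

/-- Let `K` be a real quadratic number field with no units of negative norm,
    `ε > 1` the generator of the group of totally positive units, and `p` an
    odd prime unramified in `K`.  If `ε^a ≡ b (mod p^(n+1))` in `𝓞 K` for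
    integers `a, b`, then `b ≡ 1` or `b ≡ −1 (mod p^(n+1))`. -/
theorem unit_power_congruent_int (K : Type*) [Field K] [NumberField K]
    (hdeg : Module.finrank ℚ K = 2) (φ : K →+* ℝ)
    (p : ℕ) (hp : p.Prime) (hodd : Odd p)
    (hunram : ¬ (p : ℤ) ∣ NumberField.discr K)
    (hnoneg : ∀ u : (𝓞 K)ˣ, Algebra.norm ℤ ((u : 𝓞 K)) = 1)
    (ε : (𝓞 K)ˣ)
    (hpos : 1 < φ (algebraMap (𝓞 K) K (ε : 𝓞 K)))
    (hgen : ∀ v : (𝓞 K)ˣ, ∃ k : ℤ, v = ε ^ k ∨ v = -ε ^ k)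
    (a n : ℕ) (b : ℤ)
    (hcong : ((ε : 𝓞 K)) ^ a - (b : 𝓞 K) ∈
      Ideal.span {((p : 𝓞 K)) ^ (n + 1)}) :
    (p : ℤ) ^ (n + 1) ∣ (b - 1) ∨ (p : ℤ) ^ (n + 1) ∣ (b + 1) :=
  unit_power_congruent_int_general K hdeg p hp hodd hnoneg ε a n b hcong
end

section
/- Let p be an odd prime, f(T) = a₀ + a₁T + ⋯ ∈ ℤ_p[[T]] a power series with μ-invariant 0 (some coefficient is a p-adic unit) and λ-invariant λ (the least index i with a_i a unit). If ζ is a primitive p^n-th root of unity with φ(p^n) > λ, then the p-adic valuation of f(ζ − 1) (normalized so ord_p(p) = 1, extended to ℚ_p(ζ)) equals λ/φ(p^n). -/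
/-!
Each term `aᵢ (ζ - 1)ⁱ` has norm `‖aᵢ‖ · p^(-i/φ(p^n))`. For `i < λ` the coefficient is a non-unit, so
the term has norm at most `p⁻¹`, which is below `p^(-λ/φ(p^n))` because `λ < φ(p^n)`; for `i > λ` the
power of `ζ - 1` is already smaller. The `λ`-th term therefore strictly dominates, and in an
ultrametric field a strictly dominant term determines the norm of the sum.
-/

theorem PadicInt.norm_le_inv_of_not_isUnit {p : ℕ} [Fact p.Prime] {x : ℤ_[p]} (hx : ¬IsUnit x) :
    ‖x‖ ≤ (p : ℝ)⁻¹ := by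
  simpa using (norm_lt_pow_iff_norm_le_pow_sub_one x 0).mp (by simpa using not_isUnit_iff.mp hx)

theorem IsUltrametricDist.norm_tsum_eq_of_forall_ne_le {ι E : Type*} [NormedAddCommGroup E]
    [IsUltrametricDist E] {f : ι → E} (hf : Summable f) (k : ι) {C : ℝ} (hC₀ : 0 ≤ C)
    (hC : ∀ i ≠ k, ‖f i‖ ≤ C) (hCk : C < ‖f k‖) : ‖∑' i, f i‖ = ‖f k‖ := by
  classical
  have hrest : ‖∑' i, if i = k then 0 else f i‖ < ‖f k‖ := by
    refine (norm_tsum_le_of_forall_le_of_nonneg hC₀ fun i => ?_).trans_lt hCk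
    split_ifs with hi
    · simpa using hC₀
    · exact hC i hi
  rw [hf.tsum_eq_add_tsum_ite k, norm_add_eq_max_of_norm_ne_norm hrest.ne', max_eq_left hrest.le]

theorem norm_tsum_padicInt_mul_pow_eq {p : ℕ} [Fact p.Prime] {K : Type*} [NormedField K]
    [CompleteSpace K] [IsUltrametricDist K] [Algebra ℚ_[p] K]
    (hK : ∀ x : ℚ_[p], ‖algebraMap ℚ_[p] K x‖ = ‖x‖) {π : K} (hπ : ‖π‖ < 1)
    (a : ℕ → ℤ_[p]) {lam : ℕ} (hunit : IsUnit (a lam)) (hmin : ∀ i < lam, ¬IsUnit (a i))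
    (hlam : (p : ℝ)⁻¹ < ‖π‖ ^ lam) :
    ‖∑' i, algebraMap ℚ_[p] K (a i) * π ^ i‖ = ‖π‖ ^ lam := by
  set r := ‖π‖
  have hterm : ∀ i, ‖algebraMap ℚ_[p] K (a i) * π ^ i‖ = ‖a i‖ * r ^ i := fun i => by
    simp only [norm_mul, norm_pow, hK, PadicInt.padic_norm_e_of_padicInt, r]
  have hle : ∀ i, ‖a i‖ * r ^ i ≤ r ^ i := fun i =>
    mul_le_of_le_one_left (by positivity) (PadicInt.norm_le_one _)
  have hsum : Summable fun i => algebraMap ℚ_[p] K (a i) * π ^ i :=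
    .of_norm_bounded (summable_geometric_of_lt_one (norm_nonneg _) hπ)
      fun i => (hterm i).trans_le (hle i)
  have hlead : ‖algebraMap ℚ_[p] K (a lam) * π ^ lam‖ = r ^ lam := by
    rw [hterm, PadicInt.isUnit_iff.mp hunit, one_mul]
  have hdom : max (p : ℝ)⁻¹ (r ^ (lam + 1)) < r ^ lam := by
    refine max_lt hlam ?_
    rw [pow_succ']
    exact mul_lt_of_lt_one_left ((inv_nonneg.mpr p.cast_nonneg).trans_lt hlam) hπ
  refine (IsUltrametricDist.norm_tsum_eq_of_forall_ne_le hsum lam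
    (C := max (p : ℝ)⁻¹ (r ^ (lam + 1))) (by positivity) ?_ ?_).trans ?_
  · intro i hi
    rw [hterm]
    rcases hi.lt_or_gt with h | h
    · refine le_max_of_le_left ?_
      calc ‖a i‖ * r ^ i ≤ (p : ℝ)⁻¹ * 1 :=
            mul_le_mul (PadicInt.norm_le_inv_of_not_isUnit (hmin i h))
              (pow_le_one₀ (norm_nonneg _) hπ.le) (by positivity) (by positivity)
        _ = (p : ℝ)⁻¹ := mul_one _
    · exact le_max_of_le_right ((hle i).trans (pow_le_pow_of_le_one (norm_nonneg _) hπ.le h))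
  · exact hlead ▸ hdom
  · exact hlead

theorem padic_valuation_powerseries_at_zeta_sub_one_general
    (p : ℕ) [hp : Fact p.Prime] (n : ℕ)
    (K : Type*) [NormedField K] [CompleteSpace K] [IsUltrametricDist K]
    [Algebra ℚ_[p] K]
    (hcompat : ∀ x : ℚ_[p], ‖algebraMap ℚ_[p] K x‖ = ‖x‖)
    (ζ : K)
    (hζ1 : ‖ζ - 1‖ = (p : ℝ) ^ (-(1 : ℝ) / (Nat.totient (p ^ n) : ℝ)))
    (a : ℕ → ℤ_[p]) (lam : ℕ)
    (hunit : IsUnit (a lam)) (hmin : ∀ i, i < lam → ¬ IsUnit (a i))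
    (hlt : lam < Nat.totient (p ^ n)) :
    ‖∑' i : ℕ, algebraMap ℚ_[p] K ((a i : ℚ_[p])) * (ζ - 1) ^ i‖ =
      (p : ℝ) ^ (-(lam : ℝ) / (Nat.totient (p ^ n) : ℝ)) := by
  set q := Nat.totient (p ^ n)
  have hp1 : (1 : ℝ) < p := mod_cast hp.out.one_lt
  have hq : (0 : ℝ) < q := mod_cast (Nat.totient_pos.mpr (pow_pos hp.out.pos n))
  have hpow : ‖ζ - 1‖ ^ lam = (p : ℝ) ^ (-(lam : ℝ) / q) := by
    rw [hζ1, ← Real.rpow_natCast, ← Real.rpow_mul (by positivity)]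
    congr 1
    ring
  rw [← hpow]
  refine norm_tsum_padicInt_mul_pow_eq hcompat ?_ a hunit hmin ?_
  · rw [hζ1]
    exact Real.rpow_lt_one_of_one_lt_of_neg hp1 (div_neg_of_neg_of_pos (by norm_num) hq)
  · rw [hpow, ← Real.rpow_neg_one]
    refine (Real.rpow_lt_rpow_left_iff hp1).mpr ?_
    rw [neg_div, neg_lt_neg_iff, div_lt_one hq]
    exact_mod_cast hlt

/-- Let `p` be an odd prime and `f(T) = ∑ aᵢTⁱ ∈ ℤ_p[[T]]` a power series with
    `μ`-invariant 0 and `λ`-invariant `lam` (i.e. `a_lam` is the first unit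
    coefficient).  If `ζ` is a primitive `p^n`-th root of unity (in a complete
    nonarchimedean extension of `ℚ_p`, with `ord_p(ζ−1) = 1/φ(p^n)`) and
    `φ(p^n) > lam`, then `ord_p f(ζ−1) = lam/φ(p^n)`, i.e.
    `‖f(ζ−1)‖ = p^{−lam/φ(p^n)}`. -/
theorem padic_valuation_powerseries_at_zeta_sub_one
    (p : ℕ) [hp : Fact p.Prime] (hodd : Odd p) (n : ℕ) (hn : 1 ≤ n)
    (K : Type*) [NormedField K] [CompleteSpace K] [IsUltrametricDist K]
    [Algebra ℚ_[p] K]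
    (hcompat : ∀ x : ℚ_[p], ‖algebraMap ℚ_[p] K x‖ = ‖x‖)
    (ζ : K) (hζ : IsPrimitiveRoot ζ (p ^ n))
    (hζ1 : ‖ζ - 1‖ = (p : ℝ) ^ (-(1 : ℝ) / (Nat.totient (p ^ n) : ℝ)))
    (a : ℕ → ℤ_[p]) (lam : ℕ)
    (hunit : IsUnit (a lam)) (hmin : ∀ i, i < lam → ¬ IsUnit (a i))
    (hlt : lam < Nat.totient (p ^ n)) :
    ‖∑' i : ℕ, algebraMap ℚ_[p] K ((a i : ℚ_[p])) * (ζ - 1) ^ i‖ =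
      (p : ℝ) ^ (-(lam : ℝ) / (Nat.totient (p ^ n) : ℝ)) :=
  padic_valuation_powerseries_at_zeta_sub_one_general p (hp := hp) n K hcompat ζ hζ1 a lam hunit
    hmin hlt
end
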